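/- arXiv:2006.02769 — 6 statements merged into one kernel-verified Lean document; each statement's English description precedes it below -/
import Mathlib

section
/- The map A = (A₁, A₂) : ℝ² → ℝ² is monotone in the following sense: for any (u₁,u₂), (v₁,v₂) ∈ ℝ² and any j, k ∈ {1,2} with j ≠ k, if u_j − v_j ≥ u_k − v_k, then A_j(u₁,u₂) ≥ A_j(v₁,v₂). -/
open Real Filter Topology

/-- The 2×2 matrix C(α,β) from the paper. -/
noncomputable def Cmat (a b : ℝ) : Matrix (Fin 2) (Fin 2) ℝ :=
  1 + b • !![-a, -1 + a; -1 + a, -a] + (1 - b) • !![-1 + a, -a; -a, -1 + a]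

/-- The running costs L₁, L₂. -/
noncomputable def Lfun (i : Fin 2) (a b : ℝ) : ℝ :=
  if i = 0 then a * b + 2 * (1 - a) * (1 - b) else -(a * b) - 2 * (1 - a) * (1 - b)

/-- b_i(α,β,u₁,u₂) = c_{i1}(α,β)u₁ + c_{i2}(α,β)u₂ − L_i(α,β). -/
noncomputable def bfun (i : Fin 2) (a b u₁ u₂ : ℝ) : ℝ :=
  Cmat a b i 0 * u₁ + Cmat a b i 1 * u₂ - Lfun i a b

/-- A_i(u₁,u₂) = max_{α∈𝒜} min_{β∈ℬ} b_i(α,β,u₁,u₂). -/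
noncomputable def Afun (As Bs : Set ℝ) (i : Fin 2) (u₁ u₂ : ℝ) : ℝ :=
  sSup ((fun a => sInf ((fun b => bfun i a b u₁ u₂) '' Bs)) '' As)

lemma bfun_zero (a b u₁ u₂ : ℝ) :
    bfun 0 a b u₁ u₂ = (b*(1-a)+(1-b)*a)*(u₁-u₂) - (a*b+2*(1-a)*(1-b)) := by
  simp [bfun, Cmat, Lfun, Matrix.add_apply, Matrix.smul_apply, Matrix.one_apply]
  ring

lemma bfun_one (a b u₁ u₂ : ℝ) :
    bfun 1 a b u₁ u₂ = (b*(1-a)+(1-b)*a)*(u₂-u₁) + (a*b+2*(1-a)*(1-b)) := by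
  simp [bfun, Cmat, Lfun, Matrix.add_apply, Matrix.smul_apply, Matrix.one_apply]
  ring

lemma bfun_bounds (i : Fin 2) {a b : ℝ} (ha : a ∈ Set.Icc (0:ℝ) 1)
    (hb : b ∈ Set.Icc (0:ℝ) 1) (u₁ u₂ : ℝ) :
    -(|u₁ - u₂| + 2) ≤ bfun i a b u₁ u₂ ∧ bfun i a b u₁ u₂ ≤ |u₁ - u₂| + 2 := by
  obtain ⟨ha0, ha1⟩ := ha
  obtain ⟨hb0, hb1⟩ := hb
  have hd0 : (0:ℝ) ≤ b*(1-a)+(1-b)*a := by nlinarith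
  have hd1 : b*(1-a)+(1-b)*a ≤ 1 := by nlinarith
  have habs : u₁ - u₂ ≤ |u₁ - u₂| := le_abs_self _
  have habs' : -(|u₁ - u₂|) ≤ u₁ - u₂ := neg_abs_le _
  fin_cases i
  · show -(|u₁ - u₂| + 2) ≤ bfun 0 a b u₁ u₂ ∧ bfun 0 a b u₁ u₂ ≤ |u₁ - u₂| + 2
    rw [bfun_zero]
    constructor <;> nlinarith
  · show -(|u₁ - u₂| + 2) ≤ bfun 1 a b u₁ u₂ ∧ bfun 1 a b u₁ u₂ ≤ |u₁ - u₂| + 2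
    rw [bfun_one]
    constructor <;> nlinarith

lemma bfun_mono {j k : Fin 2} (hjk : j ≠ k) {a b : ℝ} (ha : a ∈ Set.Icc (0:ℝ) 1)
    (hb : b ∈ Set.Icc (0:ℝ) 1) (u v : Fin 2 → ℝ) (h : u j - v j ≥ u k - v k) :
    bfun j a b (v 0) (v 1) ≤ bfun j a b (u 0) (u 1) := by
  obtain ⟨ha0, ha1⟩ := ha
  obtain ⟨hb0, hb1⟩ := hb
  have hd0 : (0:ℝ) ≤ b*(1-a)+(1-b)*a := by nlinarith
  fin_cases j <;> fin_cases k <;> simp_all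
  · show bfun 0 a b (v 0) (v 1) ≤ bfun 0 a b (u 0) (u 1)
    rw [bfun_zero, bfun_zero]; nlinarith
  · show bfun 1 a b (v 0) (v 1) ≤ bfun 1 a b (u 0) (u 1)
    rw [bfun_one, bfun_one]; nlinarith

theorem A_monotone (As Bs : Fin 2 → Set ℝ)
    (hAne : ∀ i, (As i).Nonempty) (hAcp : ∀ i, IsCompact (As i))
    (hAsub : ∀ i, As i ⊆ Set.Icc (0 : ℝ) 1)
    (hBne : ∀ i, (Bs i).Nonempty) (hBcp : ∀ i, IsCompact (Bs i))
    (hBsub : ∀ i, Bs i ⊆ Set.Icc (0 : ℝ) 1)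
    (u v : Fin 2 → ℝ) (j k : Fin 2) (hjk : j ≠ k)
    (h : u j - v j ≥ u k - v k) :
    Afun (As j) (Bs j) j (u 0) (u 1) ≥ Afun (As j) (Bs j) j (v 0) (v 1) := by
  obtain ⟨b₀, hb₀⟩ := hBne j
  set Fu : ℝ → ℝ := fun a => sInf ((fun b => bfun j a b (u 0) (u 1)) '' Bs j) with hFu
  set Fv : ℝ → ℝ := fun a => sInf ((fun b => bfun j a b (v 0) (v 1)) '' Bs j) with hFv
  -- upper bound for Fu on As j
  have hFuBdd : BddAbove (Fu '' As j) := by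
    refine ⟨|u 0 - u 1| + 2, ?_⟩
    rintro x ⟨a, ha, rfl⟩
    have h1 : Fu a ≤ bfun j a b₀ (u 0) (u 1) :=
      csInf_le ⟨-(|u 0 - u 1| + 2), by
        rintro y ⟨b, hb, rfl⟩
        exact (bfun_bounds j (hAsub j ha) (hBsub j hb) _ _).1⟩
        (Set.mem_image_of_mem _ hb₀)
    exact h1.trans (bfun_bounds j (hAsub j ha) (hBsub j hb₀) _ _).2
  show Afun (As j) (Bs j) j (v 0) (v 1) ≤ Afun (As j) (Bs j) j (u 0) (u 1)
  unfold Afun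
  apply csSup_le ((hAne j).image _)
  rintro x ⟨a, ha, rfl⟩
  have hlev : Fv a ≤ Fu a := by
    apply le_csInf (((hBne j)).image _)
    rintro y ⟨b, hb, rfl⟩
    have h1 : Fv a ≤ bfun j a b (v 0) (v 1) :=
      csInf_le ⟨-(|v 0 - v 1| + 2), by
        rintro z ⟨b', hb', rfl⟩
        exact (bfun_bounds j (hAsub j ha) (hBsub j hb') _ _).1⟩
        (Set.mem_image_of_mem _ hb)
    exact h1.trans (bfun_mono hjk (hAsub j ha) (hBsub j hb) u v h)
  exact hlev.trans (le_csSup hFuBdd (Set.mem_image_of_mem _ ha))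
end

section
/- For every λ > 0 and every (g₁,g₂) ∈ ℝ², there exists a unique pair (u₁,u₂) ∈ ℝ² such that λu₁ + A₁(u₁,u₂) = g₁ and λu₂ + A₂(u₁,u₂) = g₂. -/
open Real Filter Topology

/-- Normal form of `bfun`. -/
noncomputable def gfun (sgn a b t : ℝ) : ℝ :=
  (a + b - 2*a*b) * t - sgn * (a*b + 2*(1-a)*(1-b))

lemma bfun_zero_eq (a b u₁ u₂ : ℝ) : bfun 0 a b u₁ u₂ = gfun 1 a b (u₁ - u₂) := by
  simp [bfun, Cmat, Lfun, gfun, Matrix.one_apply]; ring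

lemma bfun_one_eq (a b u₁ u₂ : ℝ) : bfun 1 a b u₁ u₂ = gfun (-1) a b (u₂ - u₁) := by
  simp [bfun, Cmat, Lfun, gfun, Matrix.one_apply]; ring

lemma gfun_mono {sgn a b s t : ℝ} (ha : a ∈ Set.Icc (0:ℝ) 1) (hb : b ∈ Set.Icc (0:ℝ) 1)
    (hst : s ≤ t) : gfun sgn a b s ≤ gfun sgn a b t := by
  obtain ⟨ha0, ha1⟩ := ha; obtain ⟨hb0, hb1⟩ := hb
  simp only [gfun]
  nlinarith [mul_nonneg (show (0:ℝ) ≤ a + b - 2*a*b by nlinarith) (sub_nonneg.mpr hst)]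

lemma gfun_lip {sgn a b s t : ℝ} (ha : a ∈ Set.Icc (0:ℝ) 1) (hb : b ∈ Set.Icc (0:ℝ) 1)
    (hst : s ≤ t) : gfun sgn a b t ≤ gfun sgn a b s + (t - s) := by
  obtain ⟨ha0, ha1⟩ := ha; obtain ⟨hb0, hb1⟩ := hb
  simp only [gfun]
  nlinarith [mul_nonneg (show (0:ℝ) ≤ 1 - (a + b - 2*a*b) by nlinarith) (sub_nonneg.mpr hst)]

lemma gfun_bound {sgn a b : ℝ} (hs1 : -1 ≤ sgn) (hs2 : sgn ≤ 1)
    (ha : a ∈ Set.Icc (0:ℝ) 1) (hb : b ∈ Set.Icc (0:ℝ) 1) (t : ℝ) :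
    -(|t| + 3) ≤ gfun sgn a b t ∧ gfun sgn a b t ≤ |t| + 3 := by
  obtain ⟨ha0, ha1⟩ := ha; obtain ⟨hb0, hb1⟩ := hb
  have hc0 : (0:ℝ) ≤ a + b - 2*a*b := by nlinarith
  have hc1 : a + b - 2*a*b ≤ 1 := by nlinarith
  have he0 : (0:ℝ) ≤ a*b + 2*(1-a)*(1-b) := by nlinarith
  have he3 : a*b + 2*(1-a)*(1-b) ≤ 3 := by nlinarith
  have ht1 : t ≤ |t| := le_abs_self t
  have ht2 : -|t| ≤ t := neg_abs_le t
  have h0 : (0:ℝ) ≤ |t| := abs_nonneg t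
  constructor
  · simp only [gfun]
    nlinarith [mul_nonneg hc0 (sub_nonneg.mpr ht2), mul_nonneg (sub_nonneg.mpr hc1) h0,
      mul_nonneg (sub_nonneg.mpr hs2) he0]
  · simp only [gfun]
    nlinarith [mul_nonneg hc0 (sub_nonneg.mpr ht1), mul_nonneg (sub_nonneg.mpr hc1) h0,
      mul_nonneg (show (0:ℝ) ≤ sgn + 1 by linarith) he0]

/-- The reduced one-variable function. -/
noncomputable def Ffun (sgn : ℝ) (A B : Set ℝ) (t : ℝ) : ℝ :=
  sSup ((fun a => sInf ((fun b => gfun sgn a b t) '' B)) '' A)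

lemma Afun_zero_eq (A B : Set ℝ) (u₁ u₂ : ℝ) :
    Afun A B 0 u₁ u₂ = Ffun 1 A B (u₁ - u₂) := by
  simp only [Afun, Ffun, bfun_zero_eq]

lemma Afun_one_eq (A B : Set ℝ) (u₁ u₂ : ℝ) :
    Afun A B 1 u₁ u₂ = Ffun (-1) A B (u₂ - u₁) := by
  simp only [Afun, Ffun, bfun_one_eq]

lemma inf_comparison {B : Set ℝ} (hB : B.Nonempty) {g h : ℝ → ℝ} {c : ℝ}
    (hbdd : BddBelow (g '' B)) (hle : ∀ b ∈ B, g b ≤ h b + c) :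
    sInf (g '' B) ≤ sInf (h '' B) + c := by
  rw [← sub_le_iff_le_add]
  apply le_csInf (hB.image h)
  rintro x ⟨b, hb, rfl⟩
  have := csInf_le hbdd (Set.mem_image_of_mem g hb)
  linarith [hle b hb]

lemma sup_comparison {A : Set ℝ} (hA : A.Nonempty) {g h : ℝ → ℝ} {c : ℝ}
    (hbdd : BddAbove (h '' A)) (hle : ∀ a ∈ A, g a ≤ h a + c) :
    sSup (g '' A) ≤ sSup (h '' A) + c := by
  apply csSup_le (hA.image g)
  rintro x ⟨a, ha, rfl⟩
  have := le_csSup hbdd (Set.mem_image_of_mem h ha)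
  linarith [hle a ha]

section Ffacts

variable {sgn : ℝ} {A B : Set ℝ}

lemma inner_bddBelow (hs1 : -1 ≤ sgn) (hs2 : sgn ≤ 1) (hBsub : B ⊆ Set.Icc (0:ℝ) 1)
    {a : ℝ} (ha : a ∈ Set.Icc (0:ℝ) 1) (t : ℝ) :
    BddBelow ((fun b => gfun sgn a b t) '' B) := by
  refine ⟨-(|t| + 3), ?_⟩
  rintro x ⟨b, hb, rfl⟩
  exact (gfun_bound hs1 hs2 ha (hBsub hb) t).1

lemma outer_bddAbove (hs1 : -1 ≤ sgn) (hs2 : sgn ≤ 1) (hAsub : A ⊆ Set.Icc (0:ℝ) 1)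
    (hB : B.Nonempty) (hBsub : B ⊆ Set.Icc (0:ℝ) 1) (t : ℝ) :
    BddAbove ((fun a => sInf ((fun b => gfun sgn a b t) '' B)) '' A) := by
  refine ⟨|t| + 3, ?_⟩
  rintro x ⟨a, ha, rfl⟩
  obtain ⟨b, hb⟩ := hB
  exact csInf_le_of_le (inner_bddBelow hs1 hs2 hBsub (hAsub ha) t)
    (Set.mem_image_of_mem _ hb) (gfun_bound hs1 hs2 (hAsub ha) (hBsub hb) t).2

lemma Ffun_le (hs1 : -1 ≤ sgn) (hs2 : sgn ≤ 1) (hA : A.Nonempty)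
    (hAsub : A ⊆ Set.Icc (0:ℝ) 1) (hB : B.Nonempty) (hBsub : B ⊆ Set.Icc (0:ℝ) 1)
    {s t c : ℝ} (h : ∀ a ∈ Set.Icc (0:ℝ) 1, ∀ b ∈ Set.Icc (0:ℝ) 1,
      gfun sgn a b s ≤ gfun sgn a b t + c) :
    Ffun sgn A B s ≤ Ffun sgn A B t + c := by
  apply sup_comparison hA (outer_bddAbove hs1 hs2 hAsub hB hBsub t)
  intro a ha
  exact inf_comparison hB (inner_bddBelow hs1 hs2 hBsub (hAsub ha) s)
    (fun b hb => h a (hAsub ha) b (hBsub hb))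

lemma Ffun_mono (hs1 : -1 ≤ sgn) (hs2 : sgn ≤ 1) (hA : A.Nonempty)
    (hAsub : A ⊆ Set.Icc (0:ℝ) 1) (hB : B.Nonempty) (hBsub : B ⊆ Set.Icc (0:ℝ) 1)
    {s t : ℝ} (hst : s ≤ t) : Ffun sgn A B s ≤ Ffun sgn A B t := by
  have := Ffun_le hs1 hs2 hA hAsub hB hBsub (s := s) (t := t) (c := 0)
    (fun a ha b hb => by simpa using gfun_mono ha hb hst)
  simpa using this

lemma Ffun_lip (hs1 : -1 ≤ sgn) (hs2 : sgn ≤ 1) (hA : A.Nonempty)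
    (hAsub : A ⊆ Set.Icc (0:ℝ) 1) (hB : B.Nonempty) (hBsub : B ⊆ Set.Icc (0:ℝ) 1)
    {s t : ℝ} (hst : s ≤ t) : Ffun sgn A B t ≤ Ffun sgn A B s + (t - s) := by
  exact Ffun_le hs1 hs2 hA hAsub hB hBsub (fun a ha b hb => gfun_lip ha hb hst)

lemma Ffun_continuous (hs1 : -1 ≤ sgn) (hs2 : sgn ≤ 1) (hA : A.Nonempty)
    (hAsub : A ⊆ Set.Icc (0:ℝ) 1) (hB : B.Nonempty) (hBsub : B ⊆ Set.Icc (0:ℝ) 1) :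
    Continuous (Ffun sgn A B) := by
  have key : ∀ s t : ℝ, s ≤ t → Ffun sgn A B s ≤ Ffun sgn A B t ∧
      Ffun sgn A B t ≤ Ffun sgn A B s + (t - s) :=
    fun s t hst => ⟨Ffun_mono hs1 hs2 hA hAsub hB hBsub hst,
      Ffun_lip hs1 hs2 hA hAsub hB hBsub hst⟩
  have : LipschitzWith 1 (Ffun sgn A B) := by
    apply LipschitzWith.of_dist_le_mul
    intro s t
    rw [Real.dist_eq, Real.dist_eq, NNReal.coe_one, one_mul]
    rcases le_total s t with h | h
    · obtain ⟨h1, h2⟩ := key s t h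
      rw [abs_le]; rw [abs_of_nonpos (by linarith)]
      constructor <;> linarith
    · obtain ⟨h1, h2⟩ := key t s h
      rw [abs_le]; rw [abs_of_nonneg (by linarith)]
      constructor <;> linarith
  exact this.continuous

end Ffacts

theorem exists_unique_solution (As Bs : Fin 2 → Set ℝ)
    (hAne : ∀ i, (As i).Nonempty) (hAcp : ∀ i, IsCompact (As i))
    (hAsub : ∀ i, As i ⊆ Set.Icc (0 : ℝ) 1)
    (hBne : ∀ i, (Bs i).Nonempty) (hBcp : ∀ i, IsCompact (Bs i))
    (hBsub : ∀ i, Bs i ⊆ Set.Icc (0 : ℝ) 1)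
    (lam : ℝ) (hlam : 0 < lam) (g₁ g₂ : ℝ) :
    ∃! p : ℝ × ℝ,
      lam * p.1 + Afun (As 0) (Bs 0) 0 p.1 p.2 = g₁ ∧
      lam * p.2 + Afun (As 1) (Bs 1) 1 p.1 p.2 = g₂ := by
  set f0 : ℝ → ℝ := Ffun 1 (As 0) (Bs 0) with hf0
  set f1 : ℝ → ℝ := Ffun (-1) (As 1) (Bs 1) with hf1
  have h11 : (-1:ℝ) ≤ 1 := by norm_num
  have h1r : (1:ℝ) ≤ 1 := le_refl 1
  have hm1 : (-1:ℝ) ≤ -1 := le_refl _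
  have f0mono : ∀ {s t : ℝ}, s ≤ t → f0 s ≤ f0 t :=
    fun hst => Ffun_mono h11 h1r (hAne 0) (hAsub 0) (hBne 0) (hBsub 0) hst
  have f1mono : ∀ {s t : ℝ}, s ≤ t → f1 s ≤ f1 t :=
    fun hst => Ffun_mono hm1 h11 (hAne 1) (hAsub 1) (hBne 1) (hBsub 1) hst
  set G : ℝ → ℝ := fun t => lam * t + f0 t - f1 (-t) with hG
  have Gmono : StrictMono G := by
    intro s t hst
    have h1 : f0 s ≤ f0 t := f0mono hst.le
    have h2 : f1 (-t) ≤ f1 (-s) := f1mono (by linarith)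
    have : lam * s < lam * t := by nlinarith
    simp only [hG]; linarith
  have Gcont : Continuous G := by
    have c0 : Continuous f0 := Ffun_continuous h11 h1r (hAne 0) (hAsub 0) (hBne 0) (hBsub 0)
    have c1 : Continuous f1 := Ffun_continuous hm1 h11 (hAne 1) (hAsub 1) (hBne 1) (hBsub 1)
    exact ((continuous_const.mul continuous_id).add c0).sub (c1.comp continuous_neg)
  have Ggrow : ∀ t : ℝ, 0 ≤ t → G 0 + lam * t ≤ G t := by
    intro t ht
    have h1 : f0 0 ≤ f0 t := f0mono ht
    have h2 : f1 (-t) ≤ f1 0 := f1mono (by linarith)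
    simp only [hG]; ring_nf; nlinarith
  have Ggrow' : ∀ t : ℝ, t ≤ 0 → G t ≤ G 0 + lam * t := by
    intro t ht
    have h1 : f0 t ≤ f0 0 := f0mono ht
    have h2 : f1 0 ≤ f1 (-t) := f1mono (by linarith)
    simp only [hG]; ring_nf; nlinarith
  -- existence of t₀ with G t₀ = g₁ - g₂
  set y : ℝ := g₁ - g₂ with hy
  set T : ℝ := |y - G 0| / lam with hT
  have hT0 : 0 ≤ T := div_nonneg (abs_nonneg _) hlam.le
  have hupper : y ≤ G T := by
    have := Ggrow T hT0
    have hlt : lam * T = |y - G 0| := by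
      rw [hT]; field_simp
    have := le_abs_self (y - G 0)
    linarith
  have hlower : G (-T) ≤ y := by
    have := Ggrow' (-T) (by linarith)
    have hlt : lam * (-T) = -|y - G 0| := by
      rw [hT]; field_simp
    have := neg_abs_le (y - G 0)
    linarith
  have hivt : y ∈ G '' Set.Icc (-T) T := by
    apply intermediate_value_Icc (by linarith) Gcont.continuousOn
    exact ⟨hlower, hupper⟩
  obtain ⟨t₀, _, hGt₀⟩ := hivt
  set u₁ : ℝ := (g₁ - f0 t₀) / lam with hu₁
  set u₂ : ℝ := u₁ - t₀ with hu₂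
  have hlamu₁ : lam * u₁ = g₁ - f0 t₀ := by
    rw [hu₁]; field_simp
  have hGform : lam * t₀ + f0 t₀ - f1 (-t₀) = g₁ - g₂ := hGt₀
  refine ⟨(u₁, u₂), ⟨?_, ?_⟩, ?_⟩
  · rw [Afun_zero_eq, ← hf0, show u₁ - u₂ = t₀ by rw [hu₂]; ring]
    linarith
  · rw [Afun_one_eq, ← hf1, show u₂ - u₁ = -t₀ by rw [hu₂]; ring]
    have : lam * u₂ = lam * u₁ - lam * t₀ := by rw [hu₂]; ring
    linarith
  · rintro ⟨v₁, v₂⟩ ⟨h1, h2⟩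
    rw [Afun_zero_eq, ← hf0] at h1
    rw [Afun_one_eq, ← hf1] at h2
    set s : ℝ := v₁ - v₂ with hs
    have hvs : v₂ - v₁ = -s := by rw [hs]; ring
    rw [hvs] at h2
    have hGs : G s = g₁ - g₂ := by
      simp only [hG]
      have : lam * s = lam * v₁ - lam * v₂ := by rw [hs]; ring
      linarith
    have hst : s = t₀ := Gmono.injective (by rw [hGs, hGt₀])
    have hv₁ : v₁ = u₁ := by
      have : lam * v₁ = g₁ - f0 t₀ := by rw [← hst]; linarith
      have := this.trans hlamu₁.symm
      exact mul_left_cancel₀ hlam.ne' this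
    have hv₂ : v₂ = u₂ := by rw [hu₂, ← hv₁, ← hst, hs]; ring
    exact Prod.ext hv₁ hv₂
end

section
/- Let λ > 0 and (g₁,g₂) ∈ ℝ², and let (u₁,u₂) ∈ ℝ² satisfy λu₁ + A₁(u₁,u₂) = g₁ and λu₂ + A₂(u₁,u₂) = g₂. If (v₁,v₂) ∈ ℝ² satisfies λv₁ + A₁(v₁,v₂) ≤ g₁ and λv₂ + A₂(v₁,v₂) ≤ g₂, then v₁ ≤ u₁ and v₂ ≤ u₂. -/
open Real Filter Topology

lemma bfun0 (a b x y : ℝ) :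
    bfun 0 a b x y = (a + b - 2*a*b) * (x - y) - (a*b + 2*(1-a)*(1-b)) := by
  simp [bfun, Cmat, Lfun, Matrix.add_apply, Matrix.smul_apply, Matrix.one_apply]
  ring

lemma bfun1 (a b x y : ℝ) :
    bfun 1 a b x y = (a + b - 2*a*b) * (y - x) + (a*b + 2*(1-a)*(1-b)) := by
  simp [bfun, Cmat, Lfun, Matrix.add_apply, Matrix.smul_apply, Matrix.one_apply]
  ring

lemma bfun_abs_le (i : Fin 2) {a b : ℝ} (ha : a ∈ Set.Icc (0:ℝ) 1)
    (hb : b ∈ Set.Icc (0:ℝ) 1) (x y : ℝ) :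
    |bfun i a b x y| ≤ |x - y| + 3 := by
  obtain ⟨ha0, ha1⟩ := ha
  obtain ⟨hb0, hb1⟩ := hb
  have hc0 : 0 ≤ a + b - 2*a*b := by nlinarith
  have hc1 : a + b - 2*a*b ≤ 1 := by nlinarith
  have hL0 : 0 ≤ a*b + 2*(1-a)*(1-b) := by nlinarith
  have hL1 : a*b + 2*(1-a)*(1-b) ≤ 3 := by nlinarith
  fin_cases i
  · show |bfun 0 a b x y| ≤ _
    rw [bfun0]
    have h1 : |(a + b - 2*a*b) * (x - y)| ≤ |x - y| := by
      rw [abs_mul, abs_of_nonneg hc0]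
      nlinarith [abs_nonneg (x - y)]
    calc |(a + b - 2*a*b) * (x - y) - (a*b + 2*(1-a)*(1-b))|
        ≤ |(a + b - 2*a*b) * (x - y)| + |a*b + 2*(1-a)*(1-b)| := abs_sub _ _
      _ ≤ |x - y| + 3 := by
          rw [abs_of_nonneg hL0]; linarith
  · show |bfun 1 a b x y| ≤ _
    rw [bfun1]
    have h1 : |(a + b - 2*a*b) * (y - x)| ≤ |x - y| := by
      rw [abs_mul, abs_of_nonneg hc0, abs_sub_comm]
      nlinarith [abs_nonneg (x - y)]
    calc |(a + b - 2*a*b) * (y - x) + (a*b + 2*(1-a)*(1-b))|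
        ≤ |(a + b - 2*a*b) * (y - x)| + |a*b + 2*(1-a)*(1-b)| := abs_add_le _ _
      _ ≤ |x - y| + 3 := by
          rw [abs_of_nonneg hL0]; linarith

/-- Monotonicity of `Afun` under pointwise comparison of `bfun`. -/
lemma Afun_mono (As Bs : Set ℝ) (i : Fin 2)
    (hAne : As.Nonempty) (hAsub : As ⊆ Set.Icc (0:ℝ) 1)
    (hBne : Bs.Nonempty) (hBsub : Bs ⊆ Set.Icc (0:ℝ) 1)
    (x₁ x₂ y₁ y₂ : ℝ)
    (hmono : ∀ a ∈ Set.Icc (0:ℝ) 1, ∀ b ∈ Set.Icc (0:ℝ) 1,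
      bfun i a b x₁ x₂ ≤ bfun i a b y₁ y₂) :
    Afun As Bs i x₁ x₂ ≤ Afun As Bs i y₁ y₂ := by
  set Fx : ℝ → ℝ := fun a => sInf ((fun b => bfun i a b x₁ x₂) '' Bs) with hFx
  set Fy : ℝ → ℝ := fun a => sInf ((fun b => bfun i a b y₁ y₂) '' Bs) with hFy
  have hbddx : ∀ a ∈ As, BddBelow ((fun b => bfun i a b x₁ x₂) '' Bs) := by
    intro a ha
    refine ⟨-(|x₁ - x₂| + 3), ?_⟩
    rintro _ ⟨b, hb, rfl⟩
    have := bfun_abs_le i (hAsub ha) (hBsub hb) x₁ x₂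
    have := abs_le.mp this
    linarith [this.1]
  have hbddy : ∀ a ∈ As, BddBelow ((fun b => bfun i a b y₁ y₂) '' Bs) := by
    intro a ha
    refine ⟨-(|y₁ - y₂| + 3), ?_⟩
    rintro _ ⟨b, hb, rfl⟩
    have := abs_le.mp (bfun_abs_le i (hAsub ha) (hBsub hb) y₁ y₂)
    linarith [this.1]
  have hFxy : ∀ a ∈ As, Fx a ≤ Fy a := by
    intro a ha
    apply le_csInf (hBne.image _)
    rintro _ ⟨b, hb, rfl⟩
    calc Fx a ≤ bfun i a b x₁ x₂ :=
          csInf_le (hbddx a ha) ⟨b, hb, rfl⟩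
      _ ≤ bfun i a b y₁ y₂ := hmono a (hAsub ha) b (hBsub hb)
  have hFybd : ∀ a ∈ As, Fy a ≤ |y₁ - y₂| + 3 := by
    intro a ha
    obtain ⟨b, hb⟩ := hBne
    calc Fy a ≤ bfun i a b y₁ y₂ := csInf_le (hbddy a ha) ⟨b, hb, rfl⟩
      _ ≤ |y₁ - y₂| + 3 := (abs_le.mp (bfun_abs_le i (hAsub ha) (hBsub hb) y₁ y₂)).2
  have hbddY : BddAbove (Fy '' As) := by
    refine ⟨|y₁ - y₂| + 3, ?_⟩
    rintro _ ⟨a, ha, rfl⟩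
    exact hFybd a ha
  apply csSup_le (hAne.image _)
  rintro _ ⟨a, ha, rfl⟩
  calc Fx a ≤ Fy a := hFxy a ha
    _ ≤ sSup (Fy '' As) := le_csSup hbddY ⟨a, ha, rfl⟩

theorem comparison_sub (As Bs : Fin 2 → Set ℝ)
    (hAne : ∀ i, (As i).Nonempty) (hAcp : ∀ i, IsCompact (As i))
    (hAsub : ∀ i, As i ⊆ Set.Icc (0 : ℝ) 1)
    (hBne : ∀ i, (Bs i).Nonempty) (hBcp : ∀ i, IsCompact (Bs i))
    (hBsub : ∀ i, Bs i ⊆ Set.Icc (0 : ℝ) 1)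
    (lam : ℝ) (hlam : 0 < lam) (g₁ g₂ u₁ u₂ v₁ v₂ : ℝ)
    (hu₁ : lam * u₁ + Afun (As 0) (Bs 0) 0 u₁ u₂ = g₁)
    (hu₂ : lam * u₂ + Afun (As 1) (Bs 1) 1 u₁ u₂ = g₂)
    (hv₁ : lam * v₁ + Afun (As 0) (Bs 0) 0 v₁ v₂ ≤ g₁)
    (hv₂ : lam * v₂ + Afun (As 1) (Bs 1) 1 v₁ v₂ ≤ g₂) :
    v₁ ≤ u₁ ∧ v₂ ≤ u₂ := by
  rcases le_total (v₂ - u₂) (v₁ - u₁) with hcase | hcase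
  · -- index 0 attains the max of v − u
    have hmono : ∀ a ∈ Set.Icc (0:ℝ) 1, ∀ b ∈ Set.Icc (0:ℝ) 1,
        bfun 0 a b u₁ u₂ ≤ bfun 0 a b v₁ v₂ := by
      intro a ⟨ha0, ha1⟩ b ⟨hb0, hb1⟩
      rw [bfun0, bfun0]
      have hc0 : 0 ≤ a + b - 2*a*b := by nlinarith
      nlinarith
    have hA := Afun_mono (As 0) (Bs 0) 0 (hAne 0) (hAsub 0) (hBne 0) (hBsub 0)
      u₁ u₂ v₁ v₂ hmono
    have h1 : v₁ ≤ u₁ := by nlinarith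
    exact ⟨h1, by linarith⟩
  · -- index 1 attains the max of v − u
    have hmono : ∀ a ∈ Set.Icc (0:ℝ) 1, ∀ b ∈ Set.Icc (0:ℝ) 1,
        bfun 1 a b u₁ u₂ ≤ bfun 1 a b v₁ v₂ := by
      intro a ⟨ha0, ha1⟩ b ⟨hb0, hb1⟩
      rw [bfun1, bfun1]
      have hc0 : 0 ≤ a + b - 2*a*b := by nlinarith
      nlinarith
    have hA := Afun_mono (As 1) (Bs 1) 1 (hAne 1) (hAsub 1) (hBne 1) (hBsub 1)
      u₁ u₂ v₁ v₂ hmono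
    have h2 : v₂ ≤ u₂ := by nlinarith
    exact ⟨by linarith, h2⟩
end

section
/- For the unique solutions (X_λ, Y_λ) of λX_λ + B₁(X_λ,Y_λ) = 0, λY_λ + B₂(X_λ,Y_λ) = 0, one has liminf_{λ→0+} X_λ ≤ 1/√2 and liminf_{λ→0+} Y_λ ≤ −1/√2. -/
open Real Filter Topology

/-- The set 𝒜 = {2 − √2 + 4^{−k} : k ≥ 1} ∪ {2 − √2}. -/
noncomputable def calA : Set ℝ :=
  {x | ∃ k : ℕ, 1 ≤ k ∧ x = 2 - Real.sqrt 2 + (4 : ℝ) ^ (-(k : ℤ))} ∪ {2 - Real.sqrt 2}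

/-- The set ℬ = {0, 1}. -/
def calB : Set ℝ := {0, 1}

/-- B_i(u₁,u₂) = max_{α∈𝒜} min_{β∈ℬ} b_i(α,β,u₁,u₂). -/
noncomputable def Bop (i : Fin 2) (u₁ u₂ : ℝ) : ℝ := Afun calA calB i u₁ u₂

/-!
Both equations depend on `(u₁, u₂)` only through `w = u₁ - u₂`: with `g₀ α w = α (w + 2) - 2` and
`g₁ α w = (1 - α) w - α` (the cases `β = 0, 1`), the system reads `λ x = -P (x - y)` and
`λ y = Q (x - y)`, where `P w = max_α min (g₀, g₁)` and `Q w = min_α max (g₀, g₁)` are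
nondecreasing. Hence `w = x - y` is the unique root of `λ w + P w + Q w = 0`. Since
`P √2 = 0 ≤ Q √2`, every solution has `w < √2`, `x ≥ 0` and `y > -√2`; this lower bound is what
makes the real-valued `liminf` meaningful.

For `α ∈ 𝒜` close to `2 - √2`, the lines `g₀ α` and `g₁ α` cross at a point `w_α < √2` close
to `√2`, and there `P = Q = (w² - 2) / (2w + 3)`. For `λ = -2 P(w_α) / w_α → 0⁺` the solution is
therefore exactly `(w_α / 2, -w_α / 2) → (1/√2, -1/√2)`.
-/

open Set

noncomputable def g₀ (a w : ℝ) : ℝ := a * (w + 2) - 2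

noncomputable def g₁ (a w : ℝ) : ℝ := (1 - a) * w - a

noncomputable def maxmin (A : Set ℝ) (w : ℝ) : ℝ := sSup ((fun a => min (g₀ a w) (g₁ a w)) '' A)

noncomputable def minmax (A : Set ℝ) (w : ℝ) : ℝ := sInf ((fun a => max (g₀ a w) (g₁ a w)) '' A)

noncomputable def saddleVal (w : ℝ) : ℝ := (w ^ 2 - 2) / (2 * w + 3)

noncomputable def crossPt (a : ℝ) : ℝ := (2 - 3 * a) / (2 * a - 1)

lemma bfun_zero_zero (a u v : ℝ) : bfun 0 a 0 u v = g₀ a (u - v) := by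
  simp [bfun, Lfun, Cmat, g₀]; ring

lemma bfun_zero_one (a u v : ℝ) : bfun 0 a 1 u v = g₁ a (u - v) := by
  simp [bfun, Lfun, Cmat, g₁]; ring

lemma bfun_one_s9 (a b u v : ℝ) : bfun 1 a b u v = -bfun 0 a b u v := by
  simp [bfun, Lfun, Cmat]; ring

lemma afun_zero (A : Set ℝ) (u v : ℝ) : Afun A calB 0 u v = maxmin A (u - v) := by
  unfold Afun maxmin
  congr 1
  refine image_congr fun a _ => ?_
  rw [calB, image_pair, bfun_zero_zero, bfun_zero_one, csInf_pair]

lemma afun_one (A : Set ℝ) (u v : ℝ) : Afun A calB 1 u v = -minmax A (u - v) := by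
  unfold Afun minmax
  rw [Real.sInf_def, neg_neg, ← image_neg_eq_neg, ← image_comp]
  congr 1
  refine image_congr fun a _ => ?_
  rw [calB, image_pair, bfun_one_s9, bfun_one_s9, bfun_zero_zero, bfun_zero_one, csInf_pair,
    min_neg_neg, Function.comp_apply]

section UnitInterval

variable {A : Set ℝ} {a : ℝ}

lemma monotone_g₀ (ha : 0 ≤ a) : Monotone (g₀ a) := fun w w' h => by
  unfold g₀; nlinarith

lemma monotone_g₁ (ha : a ≤ 1) : Monotone (g₁ a) := fun w w' h => by
  unfold g₁; nlinarith

lemma bddAbove_min_image (hA : A ⊆ Icc 0 1) (w : ℝ) :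
    BddAbove ((fun a => min (g₀ a w) (g₁ a w)) '' A) := by
  refine ⟨|w|, forall_mem_image.2 fun a ha => (min_le_right _ _).trans ?_⟩
  obtain ⟨h0, h1⟩ := hA ha
  unfold g₁; nlinarith [abs_nonneg w, le_abs_self w, neg_abs_le w]

lemma bddBelow_max_image (hA : A ⊆ Icc 0 1) (w : ℝ) :
    BddBelow ((fun a => max (g₀ a w) (g₁ a w)) '' A) := by
  refine ⟨-|w| - 1, forall_mem_image.2 fun a ha => (le_max_right _ _).trans' ?_⟩
  obtain ⟨h0, h1⟩ := hA ha
  unfold g₁; nlinarith [abs_nonneg w, le_abs_self w, neg_abs_le w]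

lemma min_le_maxmin (hA : A ⊆ Icc 0 1) (ha : a ∈ A) (w : ℝ) :
    min (g₀ a w) (g₁ a w) ≤ maxmin A w :=
  le_csSup (bddAbove_min_image hA w) (mem_image_of_mem _ ha)

lemma minmax_le_max (hA : A ⊆ Icc 0 1) (ha : a ∈ A) (w : ℝ) :
    minmax A w ≤ max (g₀ a w) (g₁ a w) :=
  csInf_le (bddBelow_max_image hA w) (mem_image_of_mem _ ha)

lemma monotone_maxmin (hA : A ⊆ Icc 0 1) (hne : A.Nonempty) : Monotone (maxmin A) :=
  fun _ w' h => csSup_le (hne.image _) <| forall_mem_image.2 fun _ ha =>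
    (min_le_min (monotone_g₀ (hA ha).1 h) (monotone_g₁ (hA ha).2 h)).trans
      (min_le_maxmin hA ha w')

lemma monotone_minmax (hA : A ⊆ Icc 0 1) (hne : A.Nonempty) : Monotone (minmax A) :=
  fun w _ h => le_csInf (hne.image _) <| forall_mem_image.2 fun _ ha =>
    (minmax_le_max hA ha w).trans
      (max_le_max (monotone_g₀ (hA ha).1 h) (monotone_g₁ (hA ha).2 h))

end UnitInterval

section Saddle

variable {A : Set ℝ} {a w : ℝ}

/-- The weight `(w + 1) / (2w + 3)` on `g₀` makes the average of `g₀ a w` and `g₁ a w`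
independent of `a`, so `saddleVal w` separates the minima from the maxima. -/
lemma average_g_eq_saddleVal (a : ℝ) (hw : -1 < w) :
    (w + 1) / (2 * w + 3) * g₀ a w + (1 - (w + 1) / (2 * w + 3)) * g₁ a w = saddleVal w := by
  have : 2 * w + 3 ≠ 0 := by linarith
  unfold g₀ g₁ saddleVal
  rw [one_sub_div this, div_mul_eq_mul_div, div_mul_eq_mul_div, ← add_div, div_left_inj' this]
  ring

lemma min_le_saddleVal (a : ℝ) (hw : -1 < w) : min (g₀ a w) (g₁ a w) ≤ saddleVal w := by
  have ht : 0 ≤ (w + 1) / (2 * w + 3) := div_nonneg (by linarith) (by linarith)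
  have ht' : (w + 1) / (2 * w + 3) ≤ 1 := (div_le_one (by linarith)).2 (by linarith)
  rw [← average_g_eq_saddleVal a hw]
  nlinarith [min_le_left (g₀ a w) (g₁ a w), min_le_right (g₀ a w) (g₁ a w)]

lemma saddleVal_le_max (a : ℝ) (hw : -1 < w) : saddleVal w ≤ max (g₀ a w) (g₁ a w) := by
  have ht : 0 ≤ (w + 1) / (2 * w + 3) := div_nonneg (by linarith) (by linarith)
  have ht' : (w + 1) / (2 * w + 3) ≤ 1 := (div_le_one (by linarith)).2 (by linarith)
  rw [← average_g_eq_saddleVal a hw]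
  nlinarith [le_max_left (g₀ a w) (g₁ a w), le_max_right (g₀ a w) (g₁ a w)]

lemma maxmin_eq_saddleVal_of_crossing (hA : A ⊆ Icc 0 1) (ha : a ∈ A) (hw : -1 < w)
    (hcross : g₀ a w = g₁ a w) : maxmin A w = saddleVal w ∧ minmax A w = saddleVal w := by
  have hne : A.Nonempty := ⟨a, ha⟩
  have hmin := min_le_saddleVal a hw
  have hmax := saddleVal_le_max a hw
  rw [hcross, min_self] at hmin
  rw [hcross, max_self] at hmax
  constructor
  · refine le_antisymm (csSup_le (hne.image _) (forall_mem_image.2 fun b _ =>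
      min_le_saddleVal b hw)) ?_
    simpa [hcross, le_antisymm hmin hmax] using min_le_maxmin hA ha w
  · refine le_antisymm ?_ (le_csInf (hne.image _) (forall_mem_image.2 fun b _ =>
      saddleVal_le_max b hw))
    simpa [hcross, le_antisymm hmin hmax] using minmax_le_max hA ha w

lemma saddleVal_neg (h₀ : -1 < w) (h₁ : w < √2) : saddleVal w < 0 :=
  div_neg_of_neg_of_pos
    (by nlinarith [sq_sqrt (zero_le_two : (0 : ℝ) ≤ 2), one_lt_sqrt_two]) (by linarith)

end Saddle

lemma two_sub_sqrt_two_mem_calA : 2 - √2 ∈ calA := Or.inr rfl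

lemma calA_subset_Icc : calA ⊆ Icc (2 - √2) 1 := by
  have hsqrt : 5 / 4 ≤ √2 := by nlinarith [sq_sqrt (zero_le_two : (0 : ℝ) ≤ 2), sqrt_nonneg 2]
  rintro _ (⟨k, hk, rfl⟩ | rfl)
  · have hpos : (0 : ℝ) < 4 ^ (-(k : ℤ)) := zpow_pos (by norm_num) _
    have hle : (4 : ℝ) ^ (-(k : ℤ)) ≤ 4 ^ (-1 : ℤ) :=
      zpow_le_zpow_right₀ (by norm_num) (by omega)
    rw [zpow_neg_one] at hle
    constructor <;> linarith
  · constructor <;> linarith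

lemma calA_subset_unitInterval : calA ⊆ Icc 0 1 := fun _ ha =>
  ⟨(show (0 : ℝ) ≤ 2 - √2 by linarith [sqrt_two_lt_three_halves]).trans (calA_subset_Icc ha).1,
    (calA_subset_Icc ha).2⟩

lemma calA_nonempty : calA.Nonempty := ⟨_, two_sub_sqrt_two_mem_calA⟩

lemma maxmin_calA_sqrt_two : maxmin calA √2 = 0 := by
  have h2 := sq_sqrt (zero_le_two : (0 : ℝ) ≤ 2)
  refine le_antisymm (csSup_le (calA_nonempty.image _) (forall_mem_image.2 fun a ha => ?_)) ?_
  · have ha' := (calA_subset_Icc ha).1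
    refine (min_le_right _ _).trans ?_
    unfold g₁; nlinarith [sqrt_nonneg 2]
  · have h₀ : g₀ (2 - √2) √2 = 0 := by unfold g₀; linear_combination -h2
    have h₁ : g₁ (2 - √2) √2 = 0 := by unfold g₁; linear_combination h2
    simpa [h₀, h₁] using min_le_maxmin calA_subset_unitInterval two_sub_sqrt_two_mem_calA √2

lemma minmax_calA_sqrt_two_nonneg : 0 ≤ minmax calA √2 := by
  have h2 := sq_sqrt (zero_le_two : (0 : ℝ) ≤ 2)
  refine le_csInf (calA_nonempty.image _) (forall_mem_image.2 fun a ha => ?_)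
  have ha' := (calA_subset_Icc ha).1
  refine (le_max_left _ _).trans' ?_
  unfold g₀; nlinarith [sqrt_nonneg 2]

def IsSolution (l x y : ℝ) : Prop := l * x + Bop 0 x y = 0 ∧ l * y + Bop 1 x y = 0

section Solution

variable {l x y w : ℝ}

lemma isSolution_iff :
    IsSolution l x y ↔ l * x = -maxmin calA (x - y) ∧ l * y = minmax calA (x - y) := by
  rw [IsSolution, Bop, Bop, afun_zero, afun_one]
  constructor <;> rintro ⟨h₀, h₁⟩ <;> constructor <;> linarith

lemma IsSolution.root (h : IsSolution l x y) :
    l * (x - y) + maxmin calA (x - y) + minmax calA (x - y) = 0 := by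
  obtain ⟨h₀, h₁⟩ := isSolution_iff.1 h
  linear_combination h₀ - h₁

/-- `w ↦ l * w + maxmin calA w + minmax calA w` is strictly increasing for `l > 0`. -/
lemma IsSolution.sub_eq (hl : 0 < l) (h : IsSolution l x y)
    (hw : l * w + maxmin calA w + minmax calA w = 0) : x - y = w :=
  (((strictMono_mul_left_of_pos hl).add_monotone
    (monotone_maxmin calA_subset_unitInterval calA_nonempty)).add_monotone
    (monotone_minmax calA_subset_unitInterval calA_nonempty)).injective (h.root.trans hw.symm)

lemma lt_sqrt_two_of_root (hl : 0 < l) (hw : l * w + maxmin calA w + minmax calA w = 0) :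
    w < √2 := by
  by_contra! h
  have hP := monotone_maxmin calA_subset_unitInterval calA_nonempty h
  have hQ := monotone_minmax calA_subset_unitInterval calA_nonempty h
  have hlw : 0 < l * w := mul_pos hl ((sqrt_pos.2 two_pos).trans_le h)
  linarith [maxmin_calA_sqrt_two, minmax_calA_sqrt_two_nonneg]

lemma IsSolution.nonneg (hl : 0 < l) (h : IsSolution l x y) : 0 ≤ x := by
  have hP := monotone_maxmin calA_subset_unitInterval calA_nonempty
    (lt_sqrt_two_of_root hl h.root).le
  rw [maxmin_calA_sqrt_two] at hP
  exact nonneg_of_mul_nonneg_right (by linarith [(isSolution_iff.1 h).1]) hl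

lemma IsSolution.neg_sqrt_two_lt (hl : 0 < l) (h : IsSolution l x y) : -√2 < y := by
  linarith [h.nonneg hl, lt_sqrt_two_of_root hl h.root]

lemma IsSolution.eq_of_crossing {a : ℝ} (hl : 0 < l) (h : IsSolution l x y) (ha : a ∈ calA)
    (hw : -1 < w) (hcross : g₀ a w = g₁ a w) (hlw : l * w = -2 * saddleVal w) :
    x = w / 2 ∧ y = -(w / 2) := by
  obtain ⟨hP, hQ⟩ := maxmin_eq_saddleVal_of_crossing calA_subset_unitInterval ha hw hcross
  have hxy := h.sub_eq hl (w := w) (by rw [hP, hQ, hlw]; ring)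
  obtain ⟨hx, hy⟩ := isSolution_iff.1 h
  rw [hxy, hP] at hx
  rw [hxy, hQ] at hy
  constructor <;> refine mul_left_cancel₀ hl.ne' ?_
  · linear_combination hx - hlw / 2
  · linear_combination hy + hlw / 2

end Solution

section CrossingPoints

variable {a : ℝ}

lemma g₀_crossPt (ha : 2 * a - 1 ≠ 0) : g₀ a (crossPt a) = g₁ a (crossPt a) := by
  have hc : (2 * a - 1) * crossPt a = 2 - 3 * a := mul_div_cancel₀ _ ha
  unfold g₀ g₁
  linear_combination hc

lemma crossPt_two_sub_sqrt_two : crossPt (2 - √2) = √2 := by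
  have h2 := sq_sqrt (zero_le_two : (0 : ℝ) ≤ 2)
  have hden : 2 * (2 - √2) - 1 ≠ 0 := by nlinarith [sqrt_two_lt_three_halves]
  rw [crossPt, div_eq_iff hden]
  linear_combination 2 * h2

lemma crossPt_lt_sqrt_two (ha : 2 - √2 < a) : crossPt a < √2 := by
  have h2 := sq_sqrt (zero_le_two : (0 : ℝ) ≤ 2)
  rw [crossPt, div_lt_iff₀ (by linarith [sqrt_two_lt_three_halves])]
  nlinarith [sqrt_nonneg 2]

lemma continuousAt_crossPt (ha : 2 * a - 1 ≠ 0) : ContinuousAt crossPt a :=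
  (continuousAt_const.sub (continuousAt_const.mul continuousAt_id)).div
    ((continuousAt_const.mul continuousAt_id).sub continuousAt_const) ha

end CrossingPoints

noncomputable def calASeq (k : ℕ) : ℝ := 2 - √2 + (1 / 4) ^ (k + 1)

lemma calASeq_mem (k : ℕ) : calASeq k ∈ calA :=
  Or.inl ⟨k + 1, by omega, by rw [calASeq, zpow_neg, zpow_natCast, one_div, inv_pow]⟩

lemma two_sub_sqrt_two_lt_calASeq (k : ℕ) : 2 - √2 < calASeq k :=
  lt_add_of_pos_right _ (by positivity)

lemma tendsto_calASeq : Tendsto calASeq atTop (𝓝 (2 - √2)) := by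
  have h := (tendsto_pow_atTop_nhds_zero_of_lt_one (r := (1 / 4 : ℝ)) (by norm_num)
    (by norm_num)).comp (tendsto_add_atTop_nat 1)
  exact (add_zero (2 - √2)) ▸ tendsto_const_nhds.add h

lemma liminf_le_of_tendsto_comp {α ι : Type*} {l : Filter α} {f : Filter ι} [f.NeBot]
    {u : α → ℝ} {v : ι → α} {c : ℝ} (hu : IsBoundedUnder (· ≥ ·) l u) (hv : Tendsto v f l)
    (huv : Tendsto (u ∘ v) f (𝓝 c)) : liminf u l ≤ c :=
  (hv.liminf_le_liminf_comp huv.isCoboundedUnder_ge hu).trans_eq huv.liminf_eq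

lemma exists_tendsto_solution {X Y : ℝ → ℝ} (hsol : ∀ l, 0 < l → IsSolution l (X l) (Y l)) :
    ∃ l : ℕ → ℝ, Tendsto l atTop (𝓝[>] 0) ∧
      Tendsto (X ∘ l) atTop (𝓝 (√2 / 2)) ∧ Tendsto (Y ∘ l) atTop (𝓝 (-(√2 / 2))) := by
  have hden : 2 * (2 - √2) - 1 ≠ 0 := by nlinarith [sqrt_two_lt_three_halves]
  set w : ℕ → ℝ := fun k => crossPt (calASeq k)
  have hw : Tendsto w atTop (𝓝 √2) :=
    crossPt_two_sub_sqrt_two ▸ (continuousAt_crossPt hden).tendsto.comp tendsto_calASeq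
  have hw_pos : ∀ᶠ k in atTop, 0 < w k := hw.eventually (lt_mem_nhds (sqrt_pos.2 two_pos))
  have hw_lt k : w k < √2 := crossPt_lt_sqrt_two (two_sub_sqrt_two_lt_calASeq k)
  set l : ℕ → ℝ := fun k => -2 * saddleVal (w k) / w k
  have hl_pos : ∀ᶠ k in atTop, 0 < l k := hw_pos.mono fun k hk =>
    div_pos (by linarith [saddleVal_neg (by linarith) (hw_lt k)]) hk
  have hl : Tendsto l atTop (𝓝 0) := by
    have hs : Tendsto (fun k => saddleVal (w k)) atTop (𝓝 0) := by
      have := ((hw.pow 2).sub_const 2).div ((hw.const_mul 2).add_const 3) (by positivity)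
      rwa [sq_sqrt zero_le_two, sub_self, zero_div] at this
    have := (hs.const_mul (-2)).div hw (sqrt_pos.2 two_pos).ne'
    rwa [mul_zero, zero_div] at this
  have hXY : ∀ᶠ k in atTop, X (l k) = w k / 2 ∧ Y (l k) = -(w k / 2) :=
    (hw_pos.and hl_pos).mono fun k ⟨hwk, hlk⟩ =>
      (hsol _ hlk).eq_of_crossing hlk (calASeq_mem k) (by linarith)
        (g₀_crossPt (by linarith [two_sub_sqrt_two_lt_calASeq k, sqrt_two_lt_three_halves]))
        (div_mul_cancel₀ _ hwk.ne')
  refine ⟨l, tendsto_nhdsWithin_iff.2 ⟨hl, hl_pos⟩, ?_, ?_⟩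
  · exact (hw.div_const 2).congr' (hXY.mono fun k h => h.1.symm)
  · exact (hw.div_const 2).neg.congr' (hXY.mono fun k h => h.2.symm)

theorem liminf_bounds (X Y : ℝ → ℝ)
    (hsol : ∀ lam : ℝ, 0 < lam →
      lam * X lam + Bop 0 (X lam) (Y lam) = 0 ∧
      lam * Y lam + Bop 1 (X lam) (Y lam) = 0) :
    Filter.liminf X (𝓝[>] (0 : ℝ)) ≤ 1 / Real.sqrt 2 ∧
    Filter.liminf Y (𝓝[>] (0 : ℝ)) ≤ -(1 / Real.sqrt 2) := by
  obtain ⟨l, hl, hX, hY⟩ := exists_tendsto_solution hsol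
  have hsol' : ∀ᶠ l in 𝓝[>] (0 : ℝ), 0 < l ∧ IsSolution l (X l) (Y l) :=
    eventually_nhdsWithin_of_forall fun l hl => ⟨hl, hsol l hl⟩
  rw [← sqrt_div_self']
  exact ⟨liminf_le_of_tendsto_comp
      (isBoundedUnder_of_eventually_ge (hsol'.mono fun l h => h.2.nonneg h.1)) hl hX,
    liminf_le_of_tendsto_comp
      (isBoundedUnder_of_eventually_ge (hsol'.mono fun l h => (h.2.neg_sqrt_two_lt h.1).le)) hl hY⟩
end

section
/- For the unique solutions (X_λ, Y_λ) of λX_λ + B₁(X_λ,Y_λ) = 0, λY_λ + B₂(X_λ,Y_λ) = 0, one has limsup_{λ→0+} X_λ > 1/√2 and limsup_{λ→0+} Y_λ > −1/√2. -/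
open Real Filter Topology

/-!
Both operators only see `s = u₁ - u₂`: `B₁ = F s` with `F` nondecreasing and `B₂ = G s` with `G`
nonincreasing, so `s_λ = X_λ - Y_λ` is the unique root of `λ s = G s - F s`, and then
`λ X_λ = -F s_λ`, `λ Y_λ = -G s_λ`. Were `𝒜` just `{α₀}`, `α₀ = 2 - √2`, we would have
`F (√2 - δ) = -α₀ δ` and `G (√2 - δ) = (1 - α₀) δ` for small `δ > 0`, hence
`X_λ → 2√2 - 2 > 1/√2` and `Y_λ → √2 - 2 > -1/√2`. An action `α₀ + ε` changes this only when `ε`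
is comparable to `δ` (the best `ε` is about `δ / 34`). Along `δ = 4⁻ⁿ` every `ε = 4⁻ᵏ` lies below
`δ / 64` or above `δ / 16`, so `F (√2 - δ) ≤ -δ / 2` and `G (√2 - δ) ≤ 0.46 δ` still hold there,
which keeps `X_λ ≥ 0.72` and `Y_λ ≥ -0.69` along a sequence `λ → 0⁺`. Finally `X_λ ≤ √2` and
`Y_λ ≤ 0` for all `λ`, so `X` and `Y` are bounded above near `0⁺` and the limsups are not junk
values.
-/

theorem monotone_csSup_image {ι α : Type*} [Preorder α] {A : Set ι} (hA : A.Nonempty)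
    {f : ι → α → ℝ} (hf : ∀ a ∈ A, Monotone (f a)) (hbdd : ∀ s, BddAbove ((f · s) '' A)) :
    Monotone fun s => sSup ((f · s) '' A) := fun _ t hst =>
  csSup_le (hA.image _) (Set.forall_mem_image.2 fun a ha =>
    (hf a ha hst).trans (le_csSup (hbdd t) (Set.mem_image_of_mem _ ha)))

theorem antitone_csSup_image {ι α : Type*} [Preorder α] {A : Set ι} (hA : A.Nonempty)
    {f : ι → α → ℝ} (hf : ∀ a ∈ A, Antitone (f a)) (hbdd : ∀ s, BddAbove ((f · s) '' A)) :
    Antitone fun s => sSup ((f · s) '' A) :=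
  fun _ _ h => monotone_csSup_image (α := αᵒᵈ) hA (fun a ha _ _ h => hf a ha h) hbdd h

section Solution

variable {F G : ℝ → ℝ} {lam x y : ℝ}

theorem sub_eq_of_solution (hF : Monotone F) (hG : Antitone G) (hlam : 0 < lam)
    (hx : lam * x + F (x - y) = 0) (hy : lam * y + G (x - y) = 0) {s : ℝ}
    (hs : lam * s = G s - F s) : x - y = s := by
  have hd : lam * (x - y) = G (x - y) - F (x - y) := by linear_combination hx - hy
  have hnot : ∀ {d e}, lam * d = G d - F d → lam * e = G e - F e → ¬d < e := fun hd he hde => by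
    nlinarith [hG hde.le, hF hde.le, mul_lt_mul_of_pos_left hde hlam]
  exact le_antisymm (not_lt.1 (hnot hs hd)) (not_lt.1 (hnot hd hs))

theorem solution_le {c : ℝ} (hc : 0 ≤ c) (hF : ∀ s, c ≤ s → 0 ≤ F s) (hG : ∀ s ≤ c, 0 ≤ G s)
    (hlam : 0 < lam) (hx : lam * x + F (x - y) = 0) (hy : lam * y + G (x - y) = 0) :
    x ≤ c ∧ y ≤ 0 := by
  rcases le_total (x - y) c with h | h
  · have : y ≤ 0 := by nlinarith [hG _ h]
    constructor <;> linarith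
  · have : x ≤ 0 := by nlinarith [hF _ h]
    constructor <;> linarith

end Solution

namespace OscillatingGame

/-- `p a (u₁ - u₂)` and `q a (u₁ - u₂)` are `b₁(α, β, u₁, u₂)` at `β = 0` and `β = 1`, and
`b₂ = -b₁`; so both operators only see the difference `u₁ - u₂`. -/
def p (a s : ℝ) : ℝ := a * s - 2 * (1 - a)

def q (a s : ℝ) : ℝ := (1 - a) * s - a

noncomputable def F (s : ℝ) : ℝ := sSup ((fun a => min (p a s) (q a s)) '' calA)

noncomputable def G (s : ℝ) : ℝ := sSup ((fun a => min (-p a s) (-q a s)) '' calA)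

theorem Bop_zero_eq (u₁ u₂ : ℝ) : Bop 0 u₁ u₂ = F (u₁ - u₂) := by
  refine congrArg sSup (Set.image_congr fun a _ => ?_)
  rw [calB, Set.image_pair, csInf_pair]
  congr 1 <;> simp [bfun, Cmat, Lfun, p, q] <;> ring

theorem Bop_one_eq (u₁ u₂ : ℝ) : Bop 1 u₁ u₂ = G (u₁ - u₂) := by
  refine congrArg sSup (Set.image_congr fun a _ => ?_)
  rw [calB, Set.image_pair, csInf_pair]
  congr 1 <;> simp [bfun, Cmat, Lfun, p, q] <;> ring

theorem sqrt_two_bounds : 1.4142 < √2 ∧ √2 < 1.4143 := by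
  constructor <;> nlinarith [Real.sq_sqrt (zero_le_two : (0 : ℝ) ≤ 2), Real.sqrt_nonneg 2]

theorem p_sqrt_two_add (a t : ℝ) : p a (√2 + t) = a * t + (2 + √2) * (a - (2 - √2)) := by
  unfold p; linear_combination -Real.sq_sqrt (zero_le_two : (0 : ℝ) ≤ 2)

theorem q_sqrt_two_add (a t : ℝ) : q a (√2 + t) = (1 - a) * t - (1 + √2) * (a - (2 - √2)) := by
  unfold q; linear_combination Real.sq_sqrt (zero_le_two : (0 : ℝ) ≤ 2)

theorem sub_eq_of_mem_calA {a : ℝ} (ha : a ∈ calA) :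
    a - (2 - √2) = 0 ∨ ∃ k : ℕ, 1 ≤ k ∧ a - (2 - √2) = (4⁻¹ : ℝ) ^ k := by
  rcases ha with ⟨k, hk, rfl⟩ | rfl
  · exact Or.inr ⟨k, hk, by rw [zpow_neg, zpow_natCast, inv_pow]; ring⟩
  · exact Or.inl (sub_self _)

theorem mem_Icc_of_mem_calA {a : ℝ} (ha : a ∈ calA) : a ∈ Set.Icc 0 1 := by
  have hε : a - (2 - √2) ≤ 4⁻¹ := by
    rcases sub_eq_of_mem_calA ha with h | ⟨k, hk, h⟩
    · norm_num [h]
    · exact h ▸ pow_le_of_le_one (by norm_num) (by norm_num) (by omega)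
  have hε₀ : 0 ≤ a - (2 - √2) := by
    rcases sub_eq_of_mem_calA ha with h | ⟨k, -, h⟩ <;> rw [h]
    positivity
  constructor <;> linarith [OscillatingGame.sqrt_two_bounds]

theorem inv_four_pow_le_or_le (k n : ℕ) :
    (4⁻¹ : ℝ) ^ k ≤ (4⁻¹) ^ n / 64 ∨ (4⁻¹ : ℝ) ^ n / 16 ≤ (4⁻¹) ^ k := by
  rcases le_or_gt k (n + 2) with h | h
  · right
    calc (4⁻¹ : ℝ) ^ n / 16 = (4⁻¹) ^ (n + 2) := by ring
      _ ≤ (4⁻¹) ^ k := pow_le_pow_of_le_one (by norm_num) (by norm_num) h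
  · left
    calc (4⁻¹ : ℝ) ^ k ≤ (4⁻¹) ^ (n + 3) := pow_le_pow_of_le_one (by norm_num) (by norm_num) h
      _ = (4⁻¹) ^ n / 64 := by ring

theorem calA_sub_le_or_le (n : ℕ) {a : ℝ} (ha : a ∈ calA) :
    a - (2 - √2) ≤ (4⁻¹ : ℝ) ^ n / 64 ∨ (4⁻¹ : ℝ) ^ n / 16 ≤ a - (2 - √2) := by
  rcases sub_eq_of_mem_calA ha with h | ⟨k, -, h⟩ <;> rw [h]
  · exact Or.inl (by positivity)
  · exact inv_four_pow_le_or_le k n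

theorem calA_nonempty : calA.Nonempty := ⟨2 - √2, Or.inr rfl⟩

theorem bddAbove_image_min_p_q (s : ℝ) :
    BddAbove ((fun a => min (p a s) (q a s)) '' calA) := by
  refine ⟨|s|, Set.forall_mem_image.2 fun a ha => (min_le_left _ _).trans ?_⟩
  obtain ⟨h₀, h₁⟩ := mem_Icc_of_mem_calA ha
  unfold p; nlinarith [le_abs_self s, neg_abs_le s]

theorem bddAbove_image_min_neg_p_q (s : ℝ) :
    BddAbove ((fun a => min (-p a s) (-q a s)) '' calA) := by
  refine ⟨|s| + 2, Set.forall_mem_image.2 fun a ha => (min_le_left _ _).trans ?_⟩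
  obtain ⟨h₀, h₁⟩ := mem_Icc_of_mem_calA ha
  unfold p; nlinarith [le_abs_self s, neg_abs_le s]

theorem monotone_F : Monotone F :=
  monotone_csSup_image calA_nonempty (fun a ha s t hst => by
    obtain ⟨h₀, h₁⟩ := mem_Icc_of_mem_calA ha
    exact min_le_min (by unfold p; nlinarith) (by unfold q; nlinarith)) bddAbove_image_min_p_q

theorem antitone_G : Antitone G :=
  antitone_csSup_image calA_nonempty (fun a ha s t hst => by
    obtain ⟨h₀, h₁⟩ := mem_Icc_of_mem_calA ha
    exact min_le_min (by unfold p; nlinarith) (by unfold q; nlinarith))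
    bddAbove_image_min_neg_p_q

theorem p_two_sub_sqrt_two (s : ℝ) : p (2 - √2) s = (2 - √2) * (s - √2) := by
  unfold p; linear_combination -Real.sq_sqrt (zero_le_two : (0 : ℝ) ≤ 2)

theorem q_two_sub_sqrt_two (s : ℝ) : q (2 - √2) s = (√2 - 1) * (s - √2) := by
  unfold q; linear_combination Real.sq_sqrt (zero_le_two : (0 : ℝ) ≤ 2)

theorem min_sub_sqrt_two_le_F (s : ℝ) : min (s - √2) 0 ≤ F s := by
  refine le_trans ?_ (le_csSup (bddAbove_image_min_p_q s) ⟨_, Or.inr rfl, rfl⟩)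
  dsimp only
  rw [p_two_sub_sqrt_two, q_two_sub_sqrt_two]
  obtain ⟨h₁, h₂⟩ := sqrt_two_bounds
  rcases le_total (s - √2) 0 with h | h
  · rw [min_eq_left h]; exact le_min (by nlinarith) (by nlinarith)
  · rw [min_eq_right h]; exact le_min (by nlinarith) (by nlinarith)

theorem min_sqrt_two_sub_le_G (s : ℝ) : min (√2 - s) 0 ≤ G s := by
  refine le_trans ?_ (le_csSup (bddAbove_image_min_neg_p_q s) ⟨_, Or.inr rfl, rfl⟩)
  dsimp only
  rw [p_two_sub_sqrt_two, q_two_sub_sqrt_two]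
  obtain ⟨h₁, h₂⟩ := sqrt_two_bounds
  rcases le_total (s - √2) 0 with h | h
  · rw [min_eq_right (by linarith)]; exact le_min (by nlinarith) (by nlinarith)
  · rw [min_eq_left (by linarith)]; exact le_min (by nlinarith) (by nlinarith)

theorem min_p_q_sqrt_two_sub_le {a δ : ℝ} (hδ : 0 < δ) (hδ' : δ ≤ 1 / 4)
    (hgrid : a - (2 - √2) ≤ δ / 64 ∨ δ / 16 ≤ a - (2 - √2)) :
    min (p a (√2 - δ)) (q a (√2 - δ)) ≤ -δ / 2 ∧
      min (-p a (√2 - δ)) (-q a (√2 - δ)) ≤ 23 / 50 * δ := by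
  rw [sub_eq_add_neg, p_sqrt_two_add, q_sqrt_two_add]
  obtain ⟨h₁, h₂⟩ := sqrt_two_bounds
  set ε := a - (2 - √2)
  rw [show a = 2 - √2 + ε by ring]
  rcases hgrid with h | h
  · constructor
    · refine (min_le_left _ _).trans ?_
      nlinarith [mul_le_mul_of_nonneg_left h (by linarith : (0:ℝ) ≤ 2 + √2 - δ)]
    · refine (min_le_right _ _).trans ?_
      nlinarith [mul_le_mul_of_nonneg_left h (by linarith : (0:ℝ) ≤ 1 + √2 - δ)]
  · constructor
    · refine (min_le_right _ _).trans ?_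
      nlinarith [mul_le_mul_of_nonneg_left h (by linarith : (0:ℝ) ≤ 1 + √2 - δ)]
    · refine (min_le_left _ _).trans ?_
      nlinarith [mul_le_mul_of_nonneg_left h (by linarith : (0:ℝ) ≤ 2 + √2 - δ)]

theorem F_sqrt_two_sub_le {δ : ℝ} (hδ : 0 < δ) (hδ' : δ ≤ 1 / 4)
    (hgrid : ∀ a ∈ calA, a - (2 - √2) ≤ δ / 64 ∨ δ / 16 ≤ a - (2 - √2)) :
    F (√2 - δ) ≤ -δ / 2 :=
  csSup_le (calA_nonempty.image _) (Set.forall_mem_image.2 fun a ha =>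
    (min_p_q_sqrt_two_sub_le hδ hδ' (hgrid a ha)).1)

theorem G_sqrt_two_sub_le {δ : ℝ} (hδ : 0 < δ) (hδ' : δ ≤ 1 / 4)
    (hgrid : ∀ a ∈ calA, a - (2 - √2) ≤ δ / 64 ∨ δ / 16 ≤ a - (2 - √2)) :
    G (√2 - δ) ≤ 23 / 50 * δ :=
  csSup_le (calA_nonempty.image _) (Set.forall_mem_image.2 fun a ha =>
    (min_p_q_sqrt_two_sub_le hδ hδ' (hgrid a ha)).2)

theorem solution_le_sqrt_two {lam x y : ℝ} (hlam : 0 < lam) (hx : lam * x + F (x - y) = 0)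
    (hy : lam * y + G (x - y) = 0) : x ≤ √2 ∧ y ≤ 0 :=
  solution_le (Real.sqrt_nonneg 2)
    (fun s hs => by simpa [hs] using min_sub_sqrt_two_le_F s)
    (fun s hs => by simpa [hs] using min_sqrt_two_sub_le_G s) hlam hx hy

theorem exists_solution_ge {δ : ℝ} (hδ : 0 < δ) (hδ' : δ ≤ 1 / 64)
    (hgrid : ∀ a ∈ calA, a - (2 - √2) ≤ δ / 64 ∨ δ / 16 ≤ a - (2 - √2)) :
    ∃ lam ∈ Set.Ioo 0 (2 * δ), ∀ x y, lam * x + F (x - y) = 0 → lam * y + G (x - y) = 0 →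
      0.72 ≤ x ∧ -0.69 ≤ y := by
  set s := √2 - δ with hs
  have hF := F_sqrt_two_sub_le hδ (by linarith) hgrid
  have hG := G_sqrt_two_sub_le hδ (by linarith) hgrid
  have hF' : -δ ≤ F s := by
    simpa [hs, min_eq_left (neg_nonpos.2 hδ.le)] using min_sub_sqrt_two_le_F s
  have hG' : 0 ≤ G s := by simpa [hs, hδ.le] using min_sqrt_two_sub_le_G s
  have hs₀ : 1.398 ≤ s ∧ s ≤ 1.4143 := by constructor <;> linarith [sqrt_two_bounds]
  obtain ⟨lam, hlam_def⟩ : ∃ lam, lam = (G s - F s) / s := ⟨_, rfl⟩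
  have hlam : lam * s = G s - F s := hlam_def ▸ div_mul_cancel₀ _ (by linarith)
  have hlam₀ : 0 < lam := hlam_def ▸ div_pos (by linarith) (by linarith)
  refine ⟨lam, ⟨hlam₀, ?_⟩, fun x y hx hy => ?_⟩
  · nlinarith
  have hxy := sub_eq_of_solution monotone_F antitone_G hlam₀ hx hy hlam
  rw [hxy] at hx hy
  have hlams : 0 < lam * s := by nlinarith
  constructor
  · refine le_of_mul_le_mul_right ?_ hlams
    calc 0.72 * (lam * s) ≤ -F s * s := by
          rw [hlam]; nlinarith [mul_le_mul_of_nonneg_right hF (by linarith : (0 : ℝ) ≤ s - 0.72)]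
      _ = x * (lam * s) := by linear_combination -s * hx
  · refine le_of_mul_le_mul_right ?_ hlams
    calc -0.69 * (lam * s) ≤ -(G s * s) := by
          rw [hlam]; nlinarith [mul_le_mul_of_nonneg_right hG (by linarith : (0 : ℝ) ≤ s - 0.69)]
      _ = y * (lam * s) := by linear_combination -s * hy

theorem frequently_solution_ge {X Y : ℝ → ℝ}
    (hsol : ∀ lam, 0 < lam → lam * X lam + F (X lam - Y lam) = 0 ∧
      lam * Y lam + G (X lam - Y lam) = 0) :
    ∃ᶠ lam in 𝓝[>] 0, 0.72 ≤ X lam ∧ -0.69 ≤ Y lam := by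
  refine (nhdsGT_basis 0).frequently_iff.2 fun ε hε => ?_
  obtain ⟨n, hn⟩ := exists_pow_lt_of_lt_one hε (by norm_num : (4⁻¹ : ℝ) < 1)
  have hδ : (4⁻¹ : ℝ) ^ (n + 3) = (4⁻¹) ^ n / 64 := by ring
  have hpow : (4⁻¹ : ℝ) ^ n ≤ 1 := pow_le_one₀ (by norm_num) (by norm_num)
  obtain ⟨lam, ⟨hlam₀, hlam⟩, hbounds⟩ := exists_solution_ge (δ := (4⁻¹ : ℝ) ^ (n + 3))
    (by positivity) (by linarith) fun a ha => calA_sub_le_or_le (n + 3) ha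
  exact ⟨lam, ⟨hlam₀, by linarith⟩, hbounds _ _ (hsol lam hlam₀).1 (hsol lam hlam₀).2⟩

end OscillatingGame

theorem limsup_bounds (X Y : ℝ → ℝ)
    (hsol : ∀ lam : ℝ, 0 < lam →
      lam * X lam + Bop 0 (X lam) (Y lam) = 0 ∧
      lam * Y lam + Bop 1 (X lam) (Y lam) = 0) :
    1 / Real.sqrt 2 < Filter.limsup X (𝓝[>] (0 : ℝ)) ∧
    -(1 / Real.sqrt 2) < Filter.limsup Y (𝓝[>] (0 : ℝ)) := by
  simp only [OscillatingGame.Bop_zero_eq, OscillatingGame.Bop_one_eq] at hsol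
  have hfreq := OscillatingGame.frequently_solution_ge hsol
  have hle : ∀ᶠ lam in 𝓝[>] 0, X lam ≤ √2 ∧ Y lam ≤ 0 :=
    eventually_nhdsWithin_of_forall fun lam hlam =>
      OscillatingGame.solution_le_sqrt_two hlam (hsol lam hlam).1 (hsol lam hlam).2
  have hX : 0.72 ≤ limsup X (𝓝[>] 0) := le_limsup_of_frequently_le (hfreq.mono fun _ h => h.1)
    (isBoundedUnder_of_eventually_le (hle.mono fun _ h => h.1))
  have hY : -0.69 ≤ limsup Y (𝓝[>] 0) := le_limsup_of_frequently_le (hfreq.mono fun _ h => h.2)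
    (isBoundedUnder_of_eventually_le (hle.mono fun _ h => h.2))
  rw [← Real.sqrt_div_self']
  constructor <;> linarith [OscillatingGame.sqrt_two_bounds]
end

section
/- For every λ > 0, α₁, α₂ ∈ (0,1) and β₁, β₂ ∈ {0,1}, the unique solutions of the linear systems satisfy the antisymmetry relation X(λ,α₁,α₂,β₁,β₂) = −Y(λ,α₂,α₁,β₂,β₁); in particular X(λ,α₁,α₂,0,0) = −Y(λ,α₂,α₁,0,0), X(λ,α₁,α₂,0,1) = −Y(λ,α₂,α₁,1,0), X(λ,α₁,α₂,1,0) = −Y(λ,α₂,α₁,0,1), and X(λ,α₁,α₂,1,1) = −Y(λ,α₂,α₁,1,1). -/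
open Real Filter Topology

private lemma key (lam p q L M X Y X' Y' : ℝ) (hlam : 0 < lam) (hp : 0 < p) (hq : 0 < q)
    (hX : lam * X + p * X - p * Y - L = 0) (hY : lam * Y - q * X + q * Y + M = 0)
    (hX' : lam * X' + q * X' - q * Y' - M = 0) (hY' : lam * Y' - p * X' + p * Y' + L = 0) :
    X = -Y' := by
  have h0 : lam * (lam + p + q) * (X + Y') = 0 := by
    linear_combination (lam + q) * hX + (lam + q) * hY' + p * hY + p * hX'
  have hD : lam * (lam + p + q) ≠ 0 := by positivity
  have := (mul_eq_zero.1 h0).resolve_left hD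
  linarith

theorem antisymmetry (lam α₁ α₂ β₁ β₂ : ℝ) (hlam : 0 < lam)
    (h₁ : α₁ ∈ Set.Ioo (0 : ℝ) 1) (h₂ : α₂ ∈ Set.Ioo (0 : ℝ) 1)
    (hβ₁ : β₁ ∈ ({0, 1} : Set ℝ)) (hβ₂ : β₂ ∈ ({0, 1} : Set ℝ))
    (X Y X' Y' : ℝ)
    (hX : lam * X + bfun 0 α₁ β₁ X Y = 0) (hY : lam * Y + bfun 1 α₂ β₂ X Y = 0)
    (hX' : lam * X' + bfun 0 α₂ β₂ X' Y' = 0) (hY' : lam * Y' + bfun 1 α₁ β₁ X' Y' = 0) :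
    X = -Y' := by
  obtain ⟨ha1, ha1'⟩ := h₁
  obtain ⟨ha2, ha2'⟩ := h₂
  rcases hβ₁ with rfl | rfl <;> rcases hβ₂ with rfl | rfl <;>
    simp [bfun, Cmat, Lfun, Matrix.add_apply, Matrix.smul_apply, Matrix.one_apply]
      at hX hY hX' hY'
  · exact key lam α₁ α₂ (2*(1-α₁)) (2*(1-α₂)) X Y X' Y' hlam ha1 ha2
      (by linear_combination hX) (by linear_combination hY)
      (by linear_combination hX') (by linear_combination hY')
  · exact key lam α₁ (1-α₂) (2*(1-α₁)) α₂ X Y X' Y' hlam ha1 (by linarith)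
      (by linear_combination hX) (by linear_combination hY)
      (by linear_combination hX') (by linear_combination hY')
  · exact key lam (1-α₁) α₂ α₁ (2*(1-α₂)) X Y X' Y' hlam (by linarith) ha2
      (by linear_combination hX) (by linear_combination hY)
      (by linear_combination hX') (by linear_combination hY')
  · exact key lam (1-α₁) (1-α₂) α₁ α₂ X Y X' Y' hlam (by linarith) (by linarith)
      (by linear_combination hX) (by linear_combination hY)
      (by linear_combination hX') (by linear_combination hY')
end
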